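/- Let (Σ, L, ξ) be a state property system with Cartan map κ, let Ω be the set of connection components of the closure space (Σ, κ(L)), suppose that for every ω ∈ Ω there exists s(ω) ∈ L with κ(s(ω)) = ω, let C = {⋁_i s(ω_i) | (ω_i)_i a family of elements of Ω} ∪ {0}, and let (Ω, C, η) be the associated state property system with η(ω) = ξ(p) ∩ C for p ∈ ω and Cartan map κ_η. Then the closure space (Ω, κ_η(C)) is totally disconnected: every connected subset of (Ω, κ_η(C)) contains at most one point. -/

import Mathlib

/-- A state property system `(Σ, L, ξ)`: a set of states `S`, a complete lattice `L`
(bottom `⊥ = 0`, top `⊤ = I`) and a map `ξ` sending each state to the set of properties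
actual in it, such that `0` is never actual, actual properties are closed under arbitrary
infima (of arbitrary families, in particular `⊤ = sInf ∅` is always actual), and
`a ≤ b ↔ ∀ r, a ∈ ξ r → b ∈ ξ r`. -/
structure SPS (S : Type*) (L : Type*) [CompleteLattice L] where
  ξ : S → Set L
  bot_not_mem : ∀ p, ⊥ ∉ ξ p
  sInf_mem : ∀ p, ∀ A ⊆ ξ p, sInf A ∈ ξ p
  le_iff : ∀ a b : L, a ≤ b ↔ ∀ r, a ∈ ξ r → b ∈ ξ r

/-- The Cartan map `κ : L → P(Σ)`, `κ a = {p | a ∈ ξ p}`. -/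
def SPS.cartan {S L : Type*} [CompleteLattice L] (P : SPS S L) (a : L) : Set S :=
  {p | a ∈ P.ξ p}

/-- `a` and `b` are separated by a super selection rule. -/
def SPS.ssr {S L : Type*} [CompleteLattice L] (P : SPS S L) (a b : L) : Prop :=
  ∀ p, a ⊔ b ∈ P.ξ p → a ∈ P.ξ p ∨ b ∈ P.ξ p

/-- `a` is a classical property: it has a complement `c` with `a ⊔ c = ⊤`, `a ⊓ c = ⊥`
and `a` ssr `c`. -/
def SPS.IsClassical {S L : Type*} [CompleteLattice L] (P : SPS S L) (a : L) : Prop :=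
  ∃ c : L, a ⊔ c = ⊤ ∧ a ⊓ c = ⊥ ∧ P.ssr a c

/-- `(X, F)` is a closure space: `∅ ∈ F`, `X ∈ F`, and `F` is closed under arbitrary
nonempty intersections. -/
def IsClosureSpace {X : Type*} (F : Set (Set X)) : Prop :=
  ∅ ∈ F ∧ Set.univ ∈ F ∧ ∀ G ⊆ F, G.Nonempty → ⋂₀ G ∈ F

/-- In a closure space `(X, F)`, a set is closed iff it is in `F`, open iff its complement
is in `F`, and clopen iff both. -/
def IsClopenIn {X : Type*} (F : Set (Set X)) (A : Set X) : Prop :=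
  A ∈ F ∧ Aᶜ ∈ F

/-- A closure space is connected iff its only clopen subsets are `∅` and `X`. -/
def IsConnectedCS {X : Type*} (F : Set (Set X)) : Prop :=
  ∀ A : Set X, IsClopenIn F A → A = ∅ ∨ A = Set.univ

/-- A subset `A` of a closure space `(X, F)` is connected iff the induced subspace
`(A, {F ∩ A | F ∈ F})` is connected, i.e. the only subsets of `A` that are clopen in the
trace closure space are `∅` and `A`. -/
def IsConnectedSubset {X : Type*} (F : Set (Set X)) (A : Set X) : Prop :=
  ∀ B ⊆ A, (∃ C ∈ F, B = C ∩ A) → (∃ D ∈ F, A \ B = D ∩ A) → B = ∅ ∨ B = A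

/-- The connection component of `x`: the union of all connected subsets containing `x`. -/
def component {X : Type*} (F : Set (Set X)) (x : X) : Set X :=
  ⋃₀ {A : Set X | x ∈ A ∧ IsConnectedSubset F A}

/-- The closure operator of a closure space: `cl A` is the intersection of all members of
`F` containing `A` (the least such member, i.e. the supremum operation of the lattice `F`
applied to unions). -/
def closureOf {X : Type*} (F : Set (Set X)) (A : Set X) : Set X :=
  ⋂₀ {C ∈ F | A ⊆ C}

/-!
Let `A` be a connected set of connection components of `(Σ, κ(L))` and `U` the union of its
members. `U` is connected in `(Σ, κ(L))`: a clopen part `B` of `U` contains or misses each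
(connected) component in `A`, and the components it contains are the trace on `A` of a closed
set of `Ω`, because `κ_η(⋁ s(ω_i))` consists of the components lying in `κ(⋁ s(ω_i))`, the
closure of `⋃ ω_i`; the same holds for the complement, so connectedness of `A` forces `B = ∅`
or `B = U`. Hence all members of `A` lie in the connection component of any point of `U`.
-/

open Set

section ClosureSpace

variable {X : Type*} {F : Set (Set X)}

theorem closureOf_subset_of_mem {E c : Set X} (hc : c ∈ F) (hEc : E ⊆ c) :
    closureOf F E ⊆ c :=
  sInter_subset_of_mem ⟨hc, hEc⟩

theorem IsConnectedSubset.inter_eq_empty_or_subset {V U B : Set X}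
    (hV : IsConnectedSubset F V) (hVU : V ⊆ U)
    (hB : ∃ C ∈ F, B = C ∩ U) (hB' : ∃ D ∈ F, U \ B = D ∩ U) :
    V ∩ B = ∅ ∨ V ⊆ B := by
  obtain ⟨C, hC, rfl⟩ := hB
  obtain ⟨D, hD, hUD⟩ := hB'
  refine (hV (V ∩ (C ∩ U)) inter_subset_left ⟨C, hC, ?_⟩ ⟨D, hD, ?_⟩).imp id
    inter_eq_left.mp
  · ext x
    have := @hVU x
    simp only [mem_inter_iff]
    tauto
  · ext x
    have hx := congrArg (x ∈ ·) hUD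
    have := @hVU x
    simp only [mem_sdiff, mem_inter_iff, eq_iff_iff] at hx ⊢
    tauto

theorem isConnectedSubset_singleton (x : X) : IsConnectedSubset F {x} :=
  fun _ hB _ _ => subset_singleton_iff_eq.mp hB

theorem isConnectedSubset_sUnion {S : Set (Set X)} {x : X}
    (hS : ∀ A ∈ S, x ∈ A ∧ IsConnectedSubset F A) : IsConnectedSubset F (⋃₀ S) := by
  intro B hB hBC hBD
  have hpiece : ∀ A ∈ S, A ∩ B = ∅ ∨ A ⊆ B := fun A hA =>
    (hS A hA).2.inter_eq_empty_or_subset (subset_sUnion_of_mem hA) hBC hBD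
  by_cases hx : x ∈ B
  · refine Or.inr (hB.antisymm fun y ⟨A, hA, hyA⟩ => ?_)
    refine (hpiece A hA).elim (fun h => ?_) (· hyA)
    exact absurd (h ▸ ⟨(hS A hA).1, hx⟩ : x ∈ (∅ : Set X)) (notMem_empty x)
  · refine Or.inl (eq_empty_iff_forall_notMem.mpr fun y hy => ?_)
    obtain ⟨A, hA, hyA⟩ := hB hy
    refine (hpiece A hA).elim (fun h => ?_) (fun h => hx (h (hS A hA).1))
    exact absurd (h ▸ ⟨hyA, hy⟩ : y ∈ (∅ : Set X)) (notMem_empty y)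

theorem mem_component (F : Set (Set X)) (x : X) : x ∈ component F x :=
  ⟨{x}, ⟨rfl, isConnectedSubset_singleton x⟩, rfl⟩

theorem isConnectedSubset_component (F : Set (Set X)) (x : X) :
    IsConnectedSubset F (component F x) :=
  isConnectedSubset_sUnion fun _ hA => hA

theorem IsConnectedSubset.subset_component {A : Set X} {x : X}
    (hA : IsConnectedSubset F A) (hx : x ∈ A) : A ⊆ component F x :=
  subset_sUnion_of_mem ⟨hx, hA⟩

theorem component_eq_of_mem {x y : X} (hy : y ∈ component F x) :
    component F y = component F x :=
  ((isConnectedSubset_component F y).subset_component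
      ((isConnectedSubset_component F x).subset_component hy (mem_component F x))).antisymm
    ((isConnectedSubset_component F x).subset_component hy)

theorem IsConnectedSubset.component_eq {U : Set X} {x y : X}
    (hU : IsConnectedSubset F U) (hx : x ∈ U) (hy : y ∈ U) :
    component F x = component F y :=
  component_eq_of_mem (hU.subset_component hy hx)

end ClosureSpace

section UnionOfConnected

variable {X Y : Type*} {F : Set (Set X)} {G : Set (Set Y)} {f : Y → Set X} {A : Set Y}

theorem exists_inter_eq_setOf_subset
    (hsat : ∀ T ⊆ A, ∃ K ∈ G, T ⊆ K ∧ ∀ y ∈ K, f y ⊆ closureOf F (⋃ z ∈ T, f z))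
    {e : Set X} (he : e ∈ F) :
    ∃ K ∈ G, {y ∈ A | f y ⊆ e ∩ ⋃ z ∈ A, f z} = K ∩ A := by
  obtain ⟨K, hK, hTK, hKcl⟩ := hsat {y ∈ A | f y ⊆ e ∩ ⋃ z ∈ A, f z} (sep_subset _ _)
  refine ⟨K, hK, subset_antisymm (fun y hy => ⟨hTK hy, hy.1⟩) fun y ⟨hyK, hyA⟩ => ?_⟩
  have hcl : closureOf F (⋃ z ∈ {y ∈ A | f y ⊆ e ∩ ⋃ z ∈ A, f z}, f z) ⊆ e :=
    closureOf_subset_of_mem he (iUnion₂_subset fun z hz => hz.2.trans inter_subset_left)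
  exact ⟨hyA, subset_inter ((hKcl y hyK).trans hcl) (subset_biUnion_of_mem hyA)⟩

theorem IsConnectedSubset.biUnion (hA : IsConnectedSubset G A)
    (hf : ∀ y ∈ A, IsConnectedSubset F (f y)) (hne : ∀ y ∈ A, (f y).Nonempty)
    (hsat : ∀ T ⊆ A, ∃ K ∈ G, T ⊆ K ∧ ∀ y ∈ K, f y ⊆ closureOf F (⋃ z ∈ T, f z)) :
    IsConnectedSubset F (⋃ y ∈ A, f y) := by
  intro B hBU hBC hBD
  have hpiece : ∀ y ∈ A, f y ∩ B = ∅ ∨ f y ⊆ B := fun y hy =>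
    (hf y hy).inter_eq_empty_or_subset (subset_biUnion_of_mem hy) hBC hBD
  obtain ⟨c, hc, hBc⟩ := hBC
  obtain ⟨d, hd, hBd⟩ := hBD
  have hcompl : A \ {y ∈ A | f y ⊆ B} = {y ∈ A | f y ⊆ (⋃ y ∈ A, f y) \ B} := by
    ext y
    refine ⟨fun ⟨hyA, hyB⟩ => ⟨hyA, fun x hx => ⟨subset_biUnion_of_mem hyA hx, fun hxB => ?_⟩⟩,
      fun ⟨hyA, hyB⟩ => ⟨hyA, fun ⟨_, h⟩ => ?_⟩⟩
    · exact (hpiece y hyA).elim (fun h => h.subset ⟨hx, hxB⟩) fun h => hyB ⟨hyA, h⟩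
    · obtain ⟨x, hx⟩ := hne y hyA
      exact (hyB hx).2 (h hx)
  obtain ⟨K₁, hK₁, h₁⟩ := exists_inter_eq_setOf_subset hsat hc
  obtain ⟨K₂, hK₂, h₂⟩ := exists_inter_eq_setOf_subset hsat hd
  rw [← hBc] at h₁
  rw [← hBd, ← hcompl] at h₂
  rcases hA _ (sep_subset _ _) ⟨K₁, hK₁, h₁⟩ ⟨K₂, hK₂, h₂⟩ with hT | hT
  · refine Or.inl (eq_empty_iff_forall_notMem.mpr fun x hx => ?_)
    obtain ⟨y, hyA, hxy⟩ := mem_iUnion₂.mp (hBU hx)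
    refine (hpiece y hyA).elim (fun h => h.subset ⟨hxy, hx⟩) fun h => ?_
    exact (hT.subset ⟨hyA, h⟩ : y ∈ (∅ : Set Y))
  · refine Or.inr (hBU.antisymm fun x hx => ?_)
    obtain ⟨y, hyA, hxy⟩ := mem_iUnion₂.mp hx
    exact (hT.symm.subset hyA).2 hxy

end UnionOfConnected

namespace SPS

variable {S L : Type*} [CompleteLattice L] (P : SPS S L)

theorem cartan_mono {a b : L} (hab : a ≤ b) : P.cartan a ⊆ P.cartan b :=
  fun p hp => (P.le_iff a b).mp hab p hp

theorem cartan_subset_cartan_iff {a b : L} : P.cartan a ⊆ P.cartan b ↔ a ≤ b :=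
  ⟨fun h => (P.le_iff a b).mpr fun _ hr => h hr, P.cartan_mono⟩

theorem cartan_sSup (X : Set L) :
    P.cartan (sSup X) = closureOf (range P.cartan) (⋃ a ∈ X, P.cartan a) := by
  refine subset_antisymm (subset_sInter ?_)
    (closureOf_subset_of_mem (mem_range_self _) (iUnion₂_subset fun a ha =>
      P.cartan_mono (le_sSup ha)))
  rintro _ ⟨⟨c, rfl⟩, hc⟩
  exact P.cartan_subset_cartan_iff.mpr (sSup_le fun a ha => P.cartan_subset_cartan_iff.mp
    ((subset_biUnion_of_mem ha).trans hc))

end SPS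

theorem stmt_14_general {S L : Type*} [CompleteLattice L] (P : SPS S L) (s : Set S → L)
    (Ω : Set (Set S)) (hΩ : Ω = Set.range (component (Set.range P.cartan)))
    (hs : ∀ ω ∈ Ω, P.cartan (s ω) = ω)
    (C : Set L) (hC : C = {a : L | ∃ T ⊆ Ω, a = sSup (s '' T)})
    (inst : CompleteLattice ↥C)
    (Q : @SPS ↥Ω ↥C inst)
    (hQ : ∀ (ω : ↥Ω) (a : ↥C), a ∈ Q.ξ ω ↔ ∀ p ∈ (ω : Set S), (a : L) ∈ P.ξ p) :
    ∀ A : Set ↥Ω,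
      IsConnectedSubset (Set.range fun a : ↥C => {ω : ↥Ω | a ∈ Q.ξ ω}) A →
      A.Subsingleton := by
  intro A hA ω₁ h₁ ω₂ h₂
  have hcomp (ω : ↥Ω) : ∃ x, component (range P.cartan) x = ω := hΩ ▸ ω.2
  have hsat (T : Set ↥Ω) : ∃ K ∈ range fun a : ↥C => {ω : ↥Ω | a ∈ Q.ξ ω},
      T ⊆ K ∧ ∀ ω ∈ K, (ω : Set S) ⊆ closureOf (range P.cartan) (⋃ ω ∈ T, (ω : Set S)) := by
    let c : ↥C := ⟨sSup (s '' (Subtype.val '' T)), hC ▸ ⟨_, image_subset_iff.mpr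
      fun ω _ => ω.2, rfl⟩⟩
    have hc : P.cartan c = closureOf (range P.cartan) (⋃ ω ∈ T, (ω : Set S)) := by
      simp only [c, P.cartan_sSup, biUnion_image]
      exact congrArg _ (iUnion₂_congr fun ω _ => hs ω ω.2)
    refine ⟨_, ⟨c, rfl⟩, fun ω hω => (hQ ω c).mpr fun p hp => ?_, fun ω hω p hp => ?_⟩
    · exact P.cartan_mono (le_sSup (mem_image_of_mem s (mem_image_of_mem _ hω)))
        ((hs ω ω.2).symm ▸ hp)
    · exact hc ▸ (hQ ω c).mp hω p hp
  have hU : IsConnectedSubset (range P.cartan) (⋃ ω ∈ A, (ω : Set S)) := by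
    refine hA.biUnion (fun ω _ => ?_) (fun ω _ => ?_) fun T _ => hsat T
    all_goals obtain ⟨x, hx⟩ := hcomp ω
    exacts [hx ▸ isConnectedSubset_component _ x, ⟨x, hx ▸ mem_component _ x⟩]
  obtain ⟨x₁, hx₁⟩ := hcomp ω₁
  obtain ⟨x₂, hx₂⟩ := hcomp ω₂
  have hx₁U : x₁ ∈ ⋃ ω ∈ A, (ω : Set S) := mem_biUnion h₁ (hx₁ ▸ mem_component _ x₁)
  have hx₂U : x₂ ∈ ⋃ ω ∈ A, (ω : Set S) := mem_biUnion h₂ (hx₂ ▸ mem_component _ x₂)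
  exact Subtype.ext (hx₁ ▸ hx₂ ▸ hU.component_eq hx₁U hx₂U)

/-- Let `(Ω, C, η)` be the totally classical state property system obtained
from the decomposition of `(Σ, L, ξ)` (with `Ω` the set of connection components of
`(Σ, κ(L))`, `κ (s ω) = ω`, `C = {⋁_i s ω_i} ∪ {0}`, `η ω = ξ p ∩ C` for `p ∈ ω`), with
Cartan map `κ_η a = {ω | a ∈ η ω}`.  Then the closure space `(Ω, κ_η(C))` is totally
disconnected: every connected subset has at most one point. -/
theorem stmt_14 {S L : Type*} [CompleteLattice L] (P : SPS S L) (s : Set S → L)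
    (Ω : Set (Set S)) (hΩ : Ω = Set.range (component (Set.range P.cartan)))
    (hs : ∀ ω ∈ Ω, P.cartan (s ω) = ω)
    (C : Set L) (hC : C = {a : L | ∃ T ⊆ Ω, a = sSup (s '' T)})
    (inst : CompleteLattice ↥C)
    (hinst : ∀ a b : ↥C, inst.le a b ↔ (a : L) ≤ (b : L))
    (Q : @SPS ↥Ω ↥C inst)
    (hQ : ∀ (ω : ↥Ω) (a : ↥C), a ∈ Q.ξ ω ↔ ∀ p ∈ (ω : Set S), (a : L) ∈ P.ξ p) :
    ∀ A : Set ↥Ω,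
      IsConnectedSubset (Set.range fun a : ↥C => {ω : ↥Ω | a ∈ Q.ξ ω}) A →
      A.Subsingleton :=
  stmt_14_general P s Ω hΩ hs C hC inst Q hQ
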